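/- For the λ-biased random walk on the d-regular tree started at the root, the probability of ever returning to the root equals min(λ, d-1)/(d-1). -/

import Mathlib

/-!
The series is `p · C(p q)` with `p = λ / (d - 1 + λ)`, `q = (d - 1) / (d - 1 + λ)` and `C` the
Catalan generating function. For `0 ≤ x ≤ 1/4` the series `C(x)` converges (its partial sums at
`x = 1/4` are `2 - 2 binom(2n, n) / 4ⁿ ≤ 2`) and satisfies `x C² - C + 1 = 0`. At `x = p q` with
`p + q = 1` the roots of this quadratic are `1/p` and `1/q`, and the bound `C ≤ 2` forces
`C = 1 / max p q`. Hence the return probability is `p / max p q = min(λ, d - 1) / (d - 1)`.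
-/

noncomputable def catR (k : ℕ) : ℝ := (Nat.choose (2 * k) k : ℝ) / (k + 1)

open Finset

lemma catR_eq_catalan (k : ℕ) : catR k = catalan k := by
  rw [catalan_eq_centralBinom_div, Nat.cast_div (Nat.succ_dvd_centralBinom k) (by positivity)]
  simp [catR, Nat.centralBinom]

lemma sum_range_catalan_div_four_pow (n : ℕ) :
    ∑ k ∈ range n, (catalan k : ℝ) / 4 ^ k = 2 - 2 * n.centralBinom / 4 ^ n := by
  induction n with
  | zero => norm_num
  | succ n ih =>
    have hcat : (catalan n : ℝ) = n.centralBinom / (n + 1) := by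
      rw [eq_div_iff (by positivity), mul_comm]
      exact_mod_cast succ_mul_catalan_eq_centralBinom n
    have hbinom : ((n + 1).centralBinom : ℝ) = 2 * (2 * n + 1) * n.centralBinom / (n + 1) := by
      rw [eq_div_iff (by positivity), mul_comm]
      exact_mod_cast Nat.succ_mul_centralBinom_succ n
    rw [sum_range_succ, ih, hcat, hbinom]
    field_simp
    ring

lemma sum_range_catalan_div_four_pow_le_two (n : ℕ) :
    ∑ k ∈ range n, (catalan k : ℝ) / 4 ^ k ≤ 2 := by
  rw [sum_range_catalan_div_four_pow]
  linarith [show 0 ≤ 2 * (n.centralBinom : ℝ) / 4 ^ n by positivity]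

noncomputable def catalanGF (x : ℝ) : ℝ := ∑' n, (catalan n : ℝ) * x ^ n

section

variable {x : ℝ}

lemma catalan_mul_pow_le (hx₀ : 0 ≤ x) (hx : x ≤ 1 / 4) (n : ℕ) :
    (catalan n : ℝ) * x ^ n ≤ catalan n / 4 ^ n := by
  rw [div_eq_mul_one_div, ← one_div_pow]
  gcongr

lemma summable_catalan_mul_pow (hx₀ : 0 ≤ x) (hx : x ≤ 1 / 4) :
    Summable fun n ↦ (catalan n : ℝ) * x ^ n :=
  (summable_of_sum_range_le (fun _ ↦ by positivity)
    sum_range_catalan_div_four_pow_le_two).of_nonneg_of_le (fun _ ↦ by positivity)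
      (catalan_mul_pow_le hx₀ hx)

lemma catalanGF_le_two (hx₀ : 0 ≤ x) (hx : x ≤ 1 / 4) : catalanGF x ≤ 2 :=
  Real.tsum_le_of_sum_range_le (fun _ ↦ by positivity) fun n ↦
    (sum_le_sum fun k _ ↦ catalan_mul_pow_le hx₀ hx k).trans
      (sum_range_catalan_div_four_pow_le_two n)

lemma catalanGF_sq_mul_add_one (hx₀ : 0 ≤ x) (hx : x ≤ 1 / 4) :
    x * catalanGF x ^ 2 + 1 = catalanGF x := by
  have hs := summable_catalan_mul_pow hx₀ hx
  have hnorm : Summable fun n ↦ ‖(catalan n : ℝ) * x ^ n‖ := hs.norm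
  have hcauchy : catalanGF x ^ 2 = ∑' n, (catalan (n + 1) : ℝ) * x ^ n := by
    rw [sq, catalanGF, tsum_mul_tsum_eq_tsum_sum_antidiagonal_of_summable_norm hnorm hnorm]
    refine tsum_congr fun n ↦ ?_
    rw [catalan_succ', Nat.cast_sum, sum_mul]
    refine sum_congr rfl fun ij hij ↦ ?_
    rw [← mem_antidiagonal.mp hij, pow_add]
    push_cast
    ring
  have hshift (n : ℕ) : x * ((catalan (n + 1) : ℝ) * x ^ n) = catalan (n + 1) * x ^ (n + 1) := by
    ring
  rw [hcauchy, ← tsum_mul_left, catalanGF, hs.tsum_eq_zero_add, tsum_congr hshift, catalan_zero,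
    Nat.cast_one, pow_zero, mul_one, add_comm]

end

lemma mul_le_one_quarter_of_add_eq_one {p q : ℝ} (hpq : p + q = 1) : p * q ≤ 1 / 4 := by
  nlinarith [sq_nonneg (p - q)]

lemma max_mul_catalanGF_mul_eq_one {p q : ℝ} (hp : 0 ≤ p) (hq : 0 ≤ q) (hpq : p + q = 1) :
    max p q * catalanGF (p * q) = 1 := by
  have hx := mul_le_one_quarter_of_add_eq_one hpq
  set C := catalanGF (p * q)
  -- `x C² - C + 1` factors as `(p C - 1) (q C - 1)` when `x = p q` and `p + q = 1`.
  have hroots : (p * C - 1) * (q * C - 1) = 0 := by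
    linear_combination catalanGF_sq_mul_add_one (mul_nonneg hp hq) hx - C * hpq
  -- `C ≤ 2` singles out the smaller root `1 / max p q`.
  have hsmall : 2 * (p * q) * C ≤ 1 := by
    nlinarith [catalanGF_le_two (mul_nonneg hp hq) hx, mul_nonneg hp hq]
  rcases le_total p q with hle | hle <;> rcases mul_eq_zero.mp hroots with hpC | hqC
  · rw [max_eq_right hle]; nlinarith
  · rw [max_eq_right hle]; linarith
  · rw [max_eq_left hle]; linarith
  · rw [max_eq_left hle]; nlinarith

lemma div_max_eq_min_div {a b : ℝ} (hb : 0 < b) : a / max a b = min a b / b := by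
  rw [div_eq_div_iff (lt_max_of_lt_right hb).ne' hb.ne', min_mul_max]

/-- The probability that the `λ`-biased random walk on the `d`-regular tree ever
returns to the root, `∑_{n≥1} f^{(2n)}`, equals `min(λ, d-1)/(d-1)`. -/
theorem return_probability (d : ℕ) (hd : 2 ≤ d) (lam : ℝ) (hlam : 0 < lam) :
    ∑' n : ℕ,
        catR n * (((d : ℝ) - 1) / ((d : ℝ) - 1 + lam)) ^ n *
          (lam / ((d : ℝ) - 1 + lam)) ^ (n + 1) =
      min lam ((d : ℝ) - 1) / ((d : ℝ) - 1) := by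
  set D : ℝ := (d : ℝ) - 1
  have hD : 0 < D := by
    have : (2 : ℝ) ≤ d := by exact_mod_cast hd
    linarith
  have hs : 0 < D + lam := by positivity
  set p := lam / (D + lam)
  set q := D / (D + lam)
  have hqp : q + p = 1 := by rw [← add_div, div_self hs.ne']
  have hterm : ∀ n, catR n * q ^ n * p ^ (n + 1) = p * ((catalan n : ℝ) * (q * p) ^ n) := by
    intro n
    rw [catR_eq_catalan, mul_pow, pow_succ]
    ring
  have hC := max_mul_catalanGF_mul_eq_one (by positivity) (by positivity) hqp
  calc ∑' n, catR n * q ^ n * p ^ (n + 1) = p * catalanGF (q * p) := by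
        rw [tsum_congr hterm, tsum_mul_left, catalanGF]
    _ = p / max q p := by
        rw [eq_div_iff (by positivity), mul_assoc, mul_comm _ (max q p), hC, mul_one]
    _ = lam / max lam D := by
        rw [max_div_div_right hs.le, div_div_div_cancel_right₀ hs.ne', max_comm]
    _ = min lam D / D := div_max_eq_min_div hD
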